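/- Let (Ω, F, P) be a probability space and X_1,…,X_n independent real-valued random variables with |X_i| ≤ M/2 almost surely for some M > 0, E[X_i] = μ1 for 1 ≤ i ≤ n1 and E[X_i] = μ2 for n1 < i ≤ n, where n1, n2 ≥ 1, n = n1 + n2, and Δμ := μ2 − μ1 > 0. Then for every integer m with 1 ≤ m ≤ n2 − 1, P(W_m^+ < 0) ≤ exp( −2·n1²·(2n2−m)²·Δμ² / (M²·n·(m·(n−m−4n1) + 4·n1·(n−n1))) ). -/

import Mathlib

/-!
`W_m^+` is a linear form `∑ cᵢ Xᵢ` in the sample whose coefficients are constant on the blocks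
`[1, n₁]`, `(n₁, n₁ + m]` and `(n₁ + m, n]`. Its mean is `n₁ (2n₂ - m) Δμ / n > 0` and
`∑ cᵢ² = (m (n - m - 4n₁) + 4n₁ (n - n₁)) / n`, so `W_m^+ < 0` is a downward deviation of the
linear form by at least its mean, which Hoeffding's inequality for the independent summands
`cᵢ Xᵢ ∈ [-|cᵢ| M / 2, |cᵢ| M / 2]` controls.
-/

open MeasureTheory ProbabilityTheory Finset

theorem measureReal_sum_mul_le_sub_le_of_iIndepFun {Ω ι : Type*} [MeasurableSpace Ω]
    {P : Measure Ω} [IsProbabilityMeasure P] {X : ι → Ω → ℝ} (hindep : iIndepFun X P)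
    {s : Finset ι} (hmeas : ∀ i ∈ s, AEMeasurable (X i) P) {a b : ℝ}
    (hbdd : ∀ i ∈ s, ∀ᵐ ω ∂P, X i ω ∈ Set.Icc a b) (c : ι → ℝ) {ε : ℝ} (hε : 0 ≤ ε) :
    P.real {ω | ∑ i ∈ s, c i * X i ω ≤ ∑ i ∈ s, c i * P[X i] - ε}
      ≤ Real.exp (-2 * ε ^ 2 / ((b - a) ^ 2 * ∑ i ∈ s, c i ^ 2)) := by
  let Z : ι → Ω → ℝ := fun i ω ↦ -c i * (X i ω - P[X i])
  have hZindep : iIndepFun Z P :=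
    hindep.comp _ fun i ↦ (measurable_id.sub_const _).const_mul _
  have hZ : ∀ i ∈ s, HasSubgaussianMGF (Z i) (‖c i‖₊ ^ 2 * (‖b - a‖₊ / 2) ^ 2) P := by
    intro i hi
    convert (hasSubgaussianMGF_of_mem_Icc (hmeas i hi) (hbdd i hi)).const_mul (-c i)
      using 2
    ext
    change _ = (-c i) ^ 2 * ((‖b - a‖₊ / 2) ^ 2 : NNReal)
    simp
  have hsub : {ω | ∑ i ∈ s, c i * X i ω ≤ ∑ i ∈ s, c i * P[X i] - ε}
      = {ω | ε ≤ ∑ i ∈ s, Z i ω} := by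
    ext ω
    simp only [Set.mem_ofPred_eq, Z, neg_mul, mul_sub, sum_neg_distrib, sum_sub_distrib]
    constructor <;> intro h <;> linarith
  rw [hsub]
  refine (HasSubgaussianMGF.measure_sum_ge_le_of_iIndepFun hZindep hZ hε).trans_eq ?_
  generalize b - a = d
  simp only [NNReal.coe_sum, NNReal.coe_mul, NNReal.coe_pow, NNReal.coe_div, coe_nnnorm,
    Real.norm_eq_abs, div_pow, sq_abs, NNReal.coe_ofNat, ← sum_mul]
  congr 1
  ring

theorem sum_Icc_add_one_consecutive {R : Type*} [AddCommMonoid R] (f : ℕ → R) {a b c : ℕ}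
    (hab : a ≤ b) (hbc : b ≤ c) :
    ∑ i ∈ Icc (a + 1) c, f i = ∑ i ∈ Icc (a + 1) b, f i + ∑ i ∈ Icc (b + 1) c, f i := by
  simp only [Icc_add_one_left_eq_Ioc]
  exact (sum_Ioc_consecutive f hab hbc).symm

theorem sum_Icc_one_ite_mul {R : Type*} [NonUnitalNonAssocSemiring R] (f : ℕ → R) (α β γ : R)
    {a b c : ℕ} (hab : a ≤ b) (hbc : b ≤ c) :
    ∑ i ∈ Icc 1 c, (if i ≤ a then α else if i ≤ b then β else γ) * f i
      = α * ∑ i ∈ Icc 1 a, f i + β * ∑ i ∈ Icc (a + 1) b, f i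
        + γ * ∑ i ∈ Icc (b + 1) c, f i := by
  rw [sum_Icc_add_one_consecutive _ (Nat.zero_le b) hbc,
    sum_Icc_add_one_consecutive _ (Nat.zero_le a) hab, mul_sum, mul_sum, mul_sum]
  refine congrArg₂ (· + ·) (congrArg₂ (· + ·) ?_ ?_) ?_ <;> refine sum_congr rfl fun i hi ↦ ?_ <;>
    simp only [mem_Icc] at hi
  · rw [if_pos hi.2]
  · rw [if_neg (by omega), if_pos hi.2]
  · rw [if_neg (by omega), if_neg (by omega)]

theorem sq_div_div_mul_div {K N A D : ℝ} (hN : N ≠ 0) :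
    (K / N) ^ 2 / (A * (D / N)) = K ^ 2 / (A * N * D) := by
  rw [show A * (D / N) = A * N * D / N ^ 2 by field_simp, div_pow,
    div_div_div_cancel_right₀ (pow_ne_zero 2 hN)]

/-- The paper's `Y_k`, for the sample `x₁, …, x_{n₁+n₂}`. -/
noncomputable def splitMeanDiff (n1 n2 k : ℕ) (x : ℕ → ℝ) : ℝ :=
  1 / ((n2 : ℝ) - k) * ∑ i ∈ Icc (n1 + k + 1) (n1 + n2), x i
    - 1 / ((n1 : ℝ) + k) * ∑ i ∈ Icc 1 (n1 + k), x i

theorem splitMeanDiff_eq_of_step {n1 n2 k : ℕ} (hn1 : 1 ≤ n1) (hk : k < n2) {x : ℕ → ℝ} {μ1 μ2 : ℝ}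
    (h1 : ∀ i ∈ Icc 1 n1, x i = μ1) (h2 : ∀ i ∈ Icc (n1 + 1) (n1 + n2), x i = μ2) :
    splitMeanDiff n1 n2 k x = n1 * (μ2 - μ1) / (n1 + k) := by
  have hsub : Icc (n1 + 1) (n1 + k) ⊆ Icc (n1 + 1) (n1 + n2) := Icc_subset_Icc le_rfl (by omega)
  have hsub' : Icc (n1 + k + 1) (n1 + n2) ⊆ Icc (n1 + 1) (n1 + n2) :=
    Icc_subset_Icc (by omega) le_rfl
  rw [splitMeanDiff, sum_Icc_add_one_consecutive (a := 0) x (Nat.zero_le n1) (by omega),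
    sum_congr rfl h1, sum_congr rfl fun i hi ↦ h2 i (hsub hi),
    sum_congr rfl fun i hi ↦ h2 i (hsub' hi)]
  have hcard : #(Icc (n1 + k + 1) (n1 + n2)) = n2 - k := by simp; omega
  have hk' : (n2 : ℝ) - k ≠ 0 := sub_ne_zero.2 (by exact_mod_cast hk.ne')
  simp only [sum_const, hcard, Nat.card_Icc, Nat.add_sub_add_right, add_tsub_cancel_left,
    add_tsub_cancel_right, nsmul_eq_mul, Nat.cast_sub hk.le]
  field_simp
  ring

/-- The coefficient `cᵢ` in `W_m^+ = ∑ cᵢ Xᵢ`. -/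
noncomputable def wPlusWeight (n1 n2 m i : ℕ) : ℝ :=
  (if i ≤ n1 then -(2 * (n2 : ℝ) - m) else if i ≤ n1 + m then (n1 : ℝ) - n2 + m
    else 2 * (n1 : ℝ) + m) / (n1 + n2)

theorem sum_wPlusWeight_mul {n1 n2 m : ℕ} (hn1 : 1 ≤ n1) (hm : m < n2) (x : ℕ → ℝ) :
    ∑ i ∈ Icc 1 (n1 + n2), wPlusWeight n1 n2 m i * x i
      = n1 * n2 / (n1 + n2) * splitMeanDiff n1 n2 0 x
        + (n1 + m) * (n2 - m) / (n1 + n2) * splitMeanDiff n1 n2 m x := by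
  simp only [wPlusWeight, div_mul_eq_mul_div, ← sum_div]
  rw [sum_Icc_one_ite_mul x _ _ _ (Nat.le_add_right n1 m) (by omega : n1 + m ≤ n1 + n2)]
  simp only [splitMeanDiff, add_zero, Nat.cast_zero, sub_zero]
  rw [sum_Icc_add_one_consecutive x (Nat.le_add_right n1 m) (by omega : n1 + m ≤ n1 + n2),
    sum_Icc_add_one_consecutive (a := 0) x (Nat.zero_le n1) (Nat.le_add_right n1 m)]
  have hn1' : (n1 : ℝ) ≠ 0 := by norm_cast; omega
  have hm' : (n2 : ℝ) - m ≠ 0 := sub_ne_zero.2 (by exact_mod_cast hm.ne')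
  have hn2 : (n2 : ℝ) ≠ 0 := by exact_mod_cast (Nat.zero_le m).trans_lt hm |>.ne'
  field_simp
  ring

theorem sum_wPlusWeight_mul_of_step {n1 n2 m : ℕ} (hn1 : 1 ≤ n1) (hm : m < n2) {x : ℕ → ℝ}
    {μ1 μ2 : ℝ} (h1 : ∀ i ∈ Icc 1 n1, x i = μ1) (h2 : ∀ i ∈ Icc (n1 + 1) (n1 + n2), x i = μ2) :
    ∑ i ∈ Icc 1 (n1 + n2), wPlusWeight n1 n2 m i * x i
      = n1 * (2 * n2 - m) * (μ2 - μ1) / (n1 + n2) := by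
  rw [sum_wPlusWeight_mul hn1 hm, splitMeanDiff_eq_of_step hn1 hm h1 h2,
    splitMeanDiff_eq_of_step hn1 (by omega) h1 h2]
  have hn : (n1 : ℝ) + n2 ≠ 0 := by norm_cast; omega
  have hn1' : (n1 : ℝ) ≠ 0 := by norm_cast; omega
  field_simp
  ring

theorem sum_wPlusWeight_sq {n1 n2 m : ℕ} (hn : 0 < n1 + n2) (hm : m ≤ n2) :
    ∑ i ∈ Icc 1 (n1 + n2), wPlusWeight n1 n2 m i ^ 2
      = (m * ((n1 + n2) - m - 4 * n1) + 4 * n1 * ((n1 + n2) - n1)) / (n1 + n2) := by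
  have h := sum_Icc_one_ite_mul (fun _ ↦ (1 : ℝ)) ((-(2 * (n2 : ℝ) - m)) ^ 2)
    (((n1 : ℝ) - n2 + m) ^ 2) ((2 * (n1 : ℝ) + m) ^ 2) (Nat.le_add_right n1 m)
    (by omega : n1 + m ≤ n1 + n2)
  have hcard : #(Icc (n1 + m + 1) (n1 + n2)) = n2 - m := by simp; omega
  simp only [mul_one, sum_const, hcard, Nat.card_Icc, Nat.add_sub_add_right, add_tsub_cancel_left,
    add_tsub_cancel_right, nsmul_eq_mul, Nat.cast_sub hm] at h
  have hn' : (n1 : ℝ) + n2 ≠ 0 := by norm_cast; omega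
  simp only [wPlusWeight, div_pow, ite_pow, ← sum_div, h]
  field_simp
  ring

theorem hoeffding_bound_W_plus_general
    {Ω : Type*} [MeasurableSpace Ω] (P : Measure Ω) [IsProbabilityMeasure P]
    (n1 n2 n : ℕ) (hn1 : 1 ≤ n1) (hn2 : 1 ≤ n2) (hn : n = n1 + n2)
    (X : ℕ → Ω → ℝ) (hXmeas : ∀ i, Measurable (X i))
    (hindep : iIndepFun X P)
    (M : ℝ)
    (hbdd : ∀ i ∈ Finset.Icc 1 n, ∀ᵐ ω ∂P, |X i ω| ≤ M / 2)
    (μ1 μ2 : ℝ) (hΔμ : 0 < μ2 - μ1)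
    (hmean1 : ∀ i ∈ Finset.Icc 1 n1, ∫ ω, X i ω ∂P = μ1)
    (hmean2 : ∀ i ∈ Finset.Icc (n1 + 1) n, ∫ ω, X i ω ∂P = μ2)
    (m : ℕ) (hm : m ≤ n2 - 1)
    (Y : ℕ → Ω → ℝ)
    (hY : ∀ k ω, Y k ω = (1 / ((n2 : ℝ) - k)) * ∑ i ∈ Finset.Icc (n1 + k + 1) n, X i ω
      - (1 / ((n1 : ℝ) + k)) * ∑ i ∈ Finset.Icc 1 (n1 + k), X i ω)
    (W : Ω → ℝ)
    (hW : ∀ ω, W ω = ((n1 : ℝ) * n2 / n) * Y 0 ω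
      + (((n1 : ℝ) + m) * ((n2 : ℝ) - m) / n) * Y m ω) :
    P {ω | W ω < 0} ≤ ENNReal.ofReal
      (Real.exp (-(2 * (n1 : ℝ) ^ 2 * (2 * (n2 : ℝ) - m) ^ 2 * (μ2 - μ1) ^ 2)
        / (M ^ 2 * n * ((m : ℝ) * ((n : ℝ) - m - 4 * n1) + 4 * (n1 : ℝ) * ((n : ℝ) - n1))))) := by
  subst hn
  have hmn : m < n2 := by omega
  set c := wPlusWeight n1 n2 m
  have hW_sum (ω : Ω) : W ω = ∑ i ∈ Icc 1 (n1 + n2), c i * X i ω := by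
    rw [hW, hY, hY, sum_wPlusWeight_mul hn1 hmn]
    simp only [splitMeanDiff, Nat.cast_add]
  have hEW := sum_wPlusWeight_mul_of_step (m := m) hn1 hmn hmean1 hmean2
  have hbdd' : ∀ i ∈ Icc 1 (n1 + n2), ∀ᵐ ω ∂P, X i ω ∈ Set.Icc (-(M / 2)) (M / 2) :=
    fun i hi ↦ (hbdd i hi).mono fun ω ↦ abs_le.1
  have hε : 0 ≤ (n1 : ℝ) * (2 * n2 - m) * (μ2 - μ1) / (n1 + n2) := by
    have : (m : ℝ) ≤ n2 := by exact_mod_cast hmn.le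
    have : 0 ≤ (2 * n2 - m : ℝ) := by linarith
    positivity
  have hoeffding := measureReal_sum_mul_le_sub_le_of_iIndepFun hindep
    (fun i _ ↦ (hXmeas i).aemeasurable) hbdd' c hε
  rw [sum_wPlusWeight_sq (by omega) hmn.le, show M / 2 - -(M / 2) = M by ring,
    mul_div_assoc (-2 : ℝ), sq_div_div_mul_div (by norm_cast; omega)] at hoeffding
  calc P {ω | W ω < 0}
      ≤ P {ω | ∑ i ∈ Icc 1 (n1 + n2), c i * X i ω ≤ ∑ i ∈ Icc 1 (n1 + n2), c i * P[X i]
          - n1 * (2 * n2 - m) * (μ2 - μ1) / (n1 + n2)} := by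
        refine measure_mono fun ω hω ↦ ?_
        simp only [Set.mem_ofPred_eq, ← hW_sum] at hω ⊢
        linarith
    _ = ENNReal.ofReal (P.real _) := (ofReal_measureReal (measure_ne_top _ _)).symm
    _ ≤ _ := ENNReal.ofReal_le_ofReal <| hoeffding.trans_eq <| by push_cast; ring_nf

/-- Hoeffding bound on `P(W_m^+ < 0)` for bounded independent samples whose
means shift from `μ₁` to `μ₂ > μ₁` at the boundary `n₁`:
`P(W_m^+ < 0) ≤ exp(-2n₁²(2n₂-m)²Δμ²/(M²n(m(n-m-4n₁)+4n₁(n-n₁))))`. -/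
theorem hoeffding_bound_W_plus
    {Ω : Type*} [MeasurableSpace Ω] (P : Measure Ω) [IsProbabilityMeasure P]
    (n1 n2 n : ℕ) (hn1 : 1 ≤ n1) (hn2 : 1 ≤ n2) (hn : n = n1 + n2)
    (X : ℕ → Ω → ℝ) (hXmeas : ∀ i, Measurable (X i))
    (hindep : iIndepFun X P)
    (M : ℝ) (hM : 0 < M)
    (hbdd : ∀ i ∈ Finset.Icc 1 n, ∀ᵐ ω ∂P, |X i ω| ≤ M / 2)
    (hint : ∀ i ∈ Finset.Icc 1 n, Integrable (X i) P)
    (μ1 μ2 : ℝ) (hΔμ : 0 < μ2 - μ1)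
    (hmean1 : ∀ i ∈ Finset.Icc 1 n1, ∫ ω, X i ω ∂P = μ1)
    (hmean2 : ∀ i ∈ Finset.Icc (n1 + 1) n, ∫ ω, X i ω ∂P = μ2)
    (m : ℕ) (hm1 : 1 ≤ m) (hm : m ≤ n2 - 1)
    (Y : ℕ → Ω → ℝ)
    (hY : ∀ k ω, Y k ω = (1 / ((n2 : ℝ) - k)) * ∑ i ∈ Finset.Icc (n1 + k + 1) n, X i ω
      - (1 / ((n1 : ℝ) + k)) * ∑ i ∈ Finset.Icc 1 (n1 + k), X i ω)
    (W : Ω → ℝ)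
    (hW : ∀ ω, W ω = ((n1 : ℝ) * n2 / n) * Y 0 ω
      + (((n1 : ℝ) + m) * ((n2 : ℝ) - m) / n) * Y m ω) :
    P {ω | W ω < 0} ≤ ENNReal.ofReal
      (Real.exp (-(2 * (n1 : ℝ) ^ 2 * (2 * (n2 : ℝ) - m) ^ 2 * (μ2 - μ1) ^ 2)
        / (M ^ 2 * n * ((m : ℝ) * ((n : ℝ) - m - 4 * n1) + 4 * (n1 : ℝ) * ((n : ℝ) - n1))))) :=
  hoeffding_bound_W_plus_general P n1 n2 n hn1 hn2 hn X hXmeas hindep M hbdd μ1 μ2 hΔμ hmean1 hmean2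
    m hm Y hY W hW
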